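/- arXiv:1105.4083 — 2 statements merged into one kernel-verified Lean document; each statement's English description precedes it below -/
import Mathlib

section
/- Let D be a φ-module over K generated by x, and suppose y ∈ D also generates D. Then the minimal skew polynomials χ_{φ,x} and χ_{φ,y} are similar in K[X,σ]: there exists U ∈ K[X,σ] with rgcd(U, χ_{φ,x}) = 1 and llcm(U, χ_{φ,x}) = χ_{φ,y}·U. -/
/-!
Write `y = U(φ)(x)` with `U ∈ K[X,σ]`. Left division by a minimal polynomial shows that the
skew polynomials killing a vector are exactly the left multiples of its minimal polynomial. Hence
`χ_{φ,x}` right-divides `χ_{φ,y}·U`, which kills `x`, and a common left multiple `S·U = T·χ_{φ,x}`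
kills `x`, so `S` kills `y` and `S·U` is a left multiple of `χ_{φ,y}·U`. If `E` right-divides both
`U` and `χ_{φ,x} = B·E`, then `z = E(φ)(x)` still generates `D` (`y` is the image of `z` under a
skew polynomial), while `B(φ)(z) = 0` confines `D` to the span of `z, …, φ^(deg B - 1)(z)`.
So `dim D ≤ deg B = deg χ_{φ,x} - deg E ≤ dim D - deg E`, and `E` is a nonzero constant.
-/

/-- Multiplication in the skew polynomial ring `K[X,σ]` with `σ x = x ^ q`, so that
`X * a = a ^ q * X`: `(Σ aᵢXⁱ) ⬝ (Σ bⱼXʲ) = Σ aᵢ bⱼ^(qⁱ) X^(i+j)`.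
We use the type `Polynomial K` as the carrier of coefficients. -/
noncomputable def skewMul {K : Type*} [Field K] (q : ℕ) (P Q : Polynomial K) : Polynomial K :=
  ∑ i ∈ P.support, ∑ j ∈ Q.support,
    Polynomial.C (P.coeff i * Q.coeff j ^ q ^ i) * Polynomial.X ^ (i + j)

/-- Evaluation of a skew polynomial `Σ aᵢ Xⁱ` at a semilinear map `φ`, applied to `x`:
`Σ aᵢ • φ^[i] x`. -/
noncomputable def skewEval {K D : Type*} [Field K] [AddCommGroup D] [Module K D]
    (P : Polynomial K) (φ : D → D) (x : D) : D :=
  ∑ i ∈ P.support, P.coeff i • (φ^[i] x)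

/-- `A` right-divides `B` in `K[X,σ]` (σ x = x^q): `B = C ⬝ A` for some `C`. -/
def SkewRightDvd {K : Type*} [Field K] (q : ℕ) (A B : Polynomial K) : Prop :=
  ∃ C : Polynomial K, B = skewMul q C A

/-- `M` is a left lowest common multiple of `U` and `P` in `K[X,σ]`. -/
def IsLlcm {K : Type*} [Field K] (q : ℕ) (M U P : Polynomial K) : Prop :=
  SkewRightDvd q U M ∧ SkewRightDvd q P M ∧
    ∀ N : Polynomial K, SkewRightDvd q U N → SkewRightDvd q P N → SkewRightDvd q M N

/-- `P` is the minimal (monic, least-degree) skew polynomial annihilating `x`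
under the semilinear map `φ`; equivalently the monic generator of the left ideal
`{Q | Q(φ)(x) = 0}`. -/
def IsMinSkew {K D : Type*} [Field K] [AddCommGroup D] [Module K D]
    (P : Polynomial K) (φ : D → D) (x : D) : Prop :=
  P.Monic ∧ skewEval P φ x = 0 ∧
    ∀ Q : Polynomial K, Q ≠ 0 → skewEval Q φ x = 0 → P.natDegree ≤ Q.natDegree

/-- `P` is irreducible in `K[X,σ]`: nonconstant, and not a product of two skew
polynomials of strictly smaller degree. -/
def IrredSkew {K : Type*} [Field K] (q : ℕ) (P : Polynomial K) : Prop :=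
  0 < P.natDegree ∧ ∀ A B : Polynomial K, P = skewMul q A B →
    ¬(A.natDegree < P.natDegree ∧ B.natDegree < P.natDegree)

/-- Two skew polynomials `P`, `Q` are similar: there is `U` with `rgcd(U,P) = 1`
(every common right divisor of `U` and `P` right-divides `1`) and `llcm(U,P) = Q ⬝ U`. -/
def SkewSimilar {K : Type*} [Field K] (q : ℕ) (P Q : Polynomial K) : Prop :=
  ∃ U : Polynomial K,
    (∀ D : Polynomial K, SkewRightDvd q D U → SkewRightDvd q D P → SkewRightDvd q D 1) ∧
    IsLlcm q (skewMul q Q U) U P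

open Polynomial Module

section SkewMul

variable {K : Type*} [Field K] {q : ℕ}

theorem add_pow_pow_of_add_pow (hfrob : ∀ u v : K, (u + v) ^ q = u ^ q + v ^ q) (n : ℕ)
    (u v : K) : (u + v) ^ q ^ n = u ^ q ^ n + v ^ q ^ n := by
  induction n with
  | zero => simp
  | succ n ih => rw [pow_succ, pow_mul, pow_mul, pow_mul, ih, hfrob]

theorem skewMul_eq_sum (P Q : K[X]) :
    skewMul q P Q = P.sum fun i c => Q.sum fun j d => monomial (i + j) (c * d ^ q ^ i) := by
  simp only [skewMul, Polynomial.sum, C_mul_X_pow_eq_monomial]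

theorem skewMul_monomial (hq : q ≠ 0) (i j : ℕ) (c d : K) :
    skewMul q (monomial i c) (monomial j d) = monomial (i + j) (c * d ^ q ^ i) := by
  rw [skewMul_eq_sum, sum_monomial_index _ _ (by simp [Polynomial.sum]),
    sum_monomial_index _ _ (by simp [zero_pow (pow_ne_zero i hq)])]

theorem skewMul_zero_left (Q : K[X]) : skewMul q 0 Q = 0 := by
  simp [skewMul_eq_sum]

theorem skewMul_zero_right (P : K[X]) : skewMul q P 0 = 0 := by
  simp [skewMul_eq_sum, Polynomial.sum]

theorem skewMul_add_left (P₁ P₂ Q : K[X]) :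
    skewMul q (P₁ + P₂) Q = skewMul q P₁ Q + skewMul q P₂ Q := by
  simp only [skewMul_eq_sum]
  refine sum_add_index _ _ _ (fun i => by simp [Polynomial.sum]) fun i c₁ c₂ => ?_
  simp only [Polynomial.sum, add_mul, map_add, Finset.sum_add_distrib]

theorem skewMul_add_right (hq : q ≠ 0) (hfrob : ∀ u v : K, (u + v) ^ q = u ^ q + v ^ q)
    (P Q₁ Q₂ : K[X]) : skewMul q P (Q₁ + Q₂) = skewMul q P Q₁ + skewMul q P Q₂ := by
  simp only [skewMul_eq_sum, ← Polynomial.sum_add]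
  refine Finset.sum_congr rfl fun i _ => sum_add_index _ _ _ (fun j => ?_) fun j d₁ d₂ => ?_
  · simp [zero_pow (pow_ne_zero i hq)]
  · rw [add_pow_pow_of_add_pow hfrob, mul_add, map_add]

theorem skewMul_assoc (hq : q ≠ 0) (hfrob : ∀ u v : K, (u + v) ^ q = u ^ q + v ^ q)
    (P Q R : K[X]) : skewMul q (skewMul q P Q) R = skewMul q P (skewMul q Q R) := by
  induction P using Polynomial.induction_on' with
  | add f g hf hg => rw [skewMul_add_left, skewMul_add_left, skewMul_add_left, hf, hg]
  | monomial i a =>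
    induction Q using Polynomial.induction_on' with
    | add f g hf hg =>
      rw [skewMul_add_right hq hfrob, skewMul_add_left, skewMul_add_left,
        skewMul_add_right hq hfrob, hf, hg]
    | monomial j b =>
      induction R using Polynomial.induction_on' with
      | add f g hf hg =>
        simp only [skewMul_add_right hq hfrob, hf, hg]
      | monomial k c =>
        simp only [skewMul_monomial hq, add_assoc, mul_pow, mul_assoc, ← pow_mul, ← pow_add,
          add_comm j i]

theorem natDegree_skewMul_le (P Q : K[X]) :
    (skewMul q P Q).natDegree ≤ P.natDegree + Q.natDegree := by
  refine natDegree_sum_le_of_forall_le _ _ fun i hi => natDegree_sum_le_of_forall_le _ _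
    fun j hj => (natDegree_C_mul_le _ _).trans ?_
  rw [natDegree_X_pow]
  exact add_le_add (le_natDegree_of_mem_supp i hi) (le_natDegree_of_mem_supp j hj)

theorem coeff_skewMul_natDegree_add {P Q : K[X]} (hP : P ≠ 0) (hQ : Q ≠ 0) :
    (skewMul q P Q).coeff (P.natDegree + Q.natDegree)
      = P.leadingCoeff * Q.leadingCoeff ^ q ^ P.natDegree := by
  simp only [skewMul, finsetSum_coeff, coeff_C_mul_X_pow]
  rw [Finset.sum_eq_single_of_mem _ (natDegree_mem_support_of_nonzero hP),
    Finset.sum_eq_single_of_mem _ (natDegree_mem_support_of_nonzero hQ), if_pos rfl]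
  · rfl
  · intro j _ hj
    exact if_neg (by omega)
  · intro i hi hi'
    refine Finset.sum_eq_zero fun j hj => if_neg ?_
    have := le_natDegree_of_mem_supp i hi
    have := le_natDegree_of_mem_supp j hj
    omega

theorem leadingCoeff_mul_pow_ne_zero {P Q : K[X]} (hP : P ≠ 0) (hQ : Q ≠ 0) (n : ℕ) :
    P.leadingCoeff * Q.leadingCoeff ^ n ≠ 0 :=
  mul_ne_zero (leadingCoeff_ne_zero.2 hP) (pow_ne_zero _ (leadingCoeff_ne_zero.2 hQ))

theorem natDegree_skewMul {P Q : K[X]} (hP : P ≠ 0) (hQ : Q ≠ 0) :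
    (skewMul q P Q).natDegree = P.natDegree + Q.natDegree :=
  (natDegree_skewMul_le P Q).antisymm <| le_natDegree_of_ne_zero <| by
    rw [coeff_skewMul_natDegree_add hP hQ]
    exact leadingCoeff_mul_pow_ne_zero hP hQ _

theorem leadingCoeff_skewMul {P Q : K[X]} (hP : P ≠ 0) (hQ : Q ≠ 0) :
    (skewMul q P Q).leadingCoeff = P.leadingCoeff * Q.leadingCoeff ^ q ^ P.natDegree := by
  rw [leadingCoeff, natDegree_skewMul hP hQ, coeff_skewMul_natDegree_add hP hQ]

theorem skewMul_ne_zero {P Q : K[X]} (hP : P ≠ 0) (hQ : Q ≠ 0) : skewMul q P Q ≠ 0 := by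
  rw [← leadingCoeff_ne_zero, leadingCoeff_skewMul hP hQ]
  exact leadingCoeff_mul_pow_ne_zero hP hQ _

theorem exists_eq_skewMul_add_of_ne_zero {B : K[X]} (hB : B ≠ 0) (A : K[X]) :
    ∃ Q R : K[X], A = skewMul q Q B + R ∧ R.degree < B.degree := by
  classical
  induction A using degree_lt_wf.induction with
  | _ A ih =>
  by_cases hAB : A.degree < B.degree
  · exact ⟨0, A, by rw [skewMul_zero_left, zero_add], hAB⟩
  have hA : A ≠ 0 := by
    rintro rfl
    exact hAB (bot_lt_iff_ne_bot.2 (degree_ne_bot.2 hB))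
  have hBA : B.natDegree ≤ A.natDegree := natDegree_le_natDegree (not_lt.1 hAB)
  set m := A.natDegree - B.natDegree
  set c := A.leadingCoeff / B.leadingCoeff ^ q ^ m
  have hc : c ≠ 0 := div_ne_zero (leadingCoeff_ne_zero.2 hA)
    (pow_ne_zero _ (leadingCoeff_ne_zero.2 hB))
  have hm : monomial m c ≠ 0 := by rwa [Ne, monomial_eq_zero_iff]
  set T := skewMul q (monomial m c) B
  have hTdeg : T.natDegree = A.natDegree := by
    rw [natDegree_skewMul hm hB, natDegree_monomial, if_neg hc]
    omega
  have hTlc : T.leadingCoeff = A.leadingCoeff := by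
    rw [leadingCoeff_skewMul hm hB, leadingCoeff_monomial, natDegree_monomial, if_neg hc,
      div_mul_cancel₀ _ (pow_ne_zero _ (leadingCoeff_ne_zero.2 hB))]
  have hdeg : A.degree = T.degree := by
    rw [degree_eq_natDegree hA, degree_eq_natDegree (skewMul_ne_zero hm hB), hTdeg]
  obtain ⟨Q, R, hQR, hR⟩ := ih (A - T) (degree_sub_lt_left hdeg hA hTlc.symm)
  refine ⟨monomial m c + Q, R, ?_, hR⟩
  rw [skewMul_add_left, add_assoc, ← hQR, add_sub_cancel]

theorem ne_zero_of_skewRightDvd {E P : K[X]} (h : SkewRightDvd q E P) (hP : P ≠ 0) : E ≠ 0 := by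
  rintro rfl
  obtain ⟨C, rfl⟩ := h
  exact hP (skewMul_zero_right C)

theorem skewRightDvd_one_of_natDegree_eq_zero (hq : q ≠ 0) {E : K[X]} (hE : E ≠ 0)
    (hdeg : E.natDegree = 0) : SkewRightDvd q E 1 := by
  rw [eq_C_of_natDegree_eq_zero hdeg] at hE ⊢
  refine ⟨C (E.coeff 0)⁻¹, ?_⟩
  rw [← monomial_zero_left, ← monomial_zero_left, skewMul_monomial hq, pow_zero, pow_one,
    inv_mul_cancel₀ (by simpa using hE), monomial_zero_left, C_1]

end SkewMul

section SkewEval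

variable {K D : Type*} [Field K] [AddCommGroup D] [Module K D] {q : ℕ} {φ : D → D}

theorem skewEval_monomial (i : ℕ) (c : K) (x : D) :
    skewEval (monomial i c) φ x = c • φ^[i] x :=
  sum_monomial_index _ (fun i c => c • φ^[i] x) (zero_smul K _)

theorem skewEval_add (P Q : K[X]) (x : D) :
    skewEval (P + Q) φ x = skewEval P φ x + skewEval Q φ x :=
  sum_add_index _ _ (fun i c => c • φ^[i] x) (fun _ => zero_smul K _) fun _ _ _ => add_smul _ _ _

theorem skewEval_finset_sum {ι : Type*} (s : Finset ι) (f : ι → K[X]) (x : D) :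
    skewEval (∑ j ∈ s, f j) φ x = ∑ j ∈ s, skewEval (f j) φ x :=
  map_sum (AddMonoidHom.mk' (skewEval · φ x) (skewEval_add · · x)) f s

theorem skewEval_ofFn [DecidableEq K] {n : ℕ} (c : Fin n → K) (x : D) :
    skewEval (ofFn n c) φ x = ∑ i, c i • φ^[i] x := by
  simp only [ofFn_eq_sum_monomial, skewEval_finset_sum, skewEval_monomial]

theorem skewEval_apply_zero (hadd : ∀ u v : D, φ (u + v) = φ u + φ v) (P : K[X]) :
    skewEval P φ 0 = 0 :=
  Finset.sum_eq_zero fun i _ => by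
    rw [show φ^[i] 0 = 0 from iterate_map_zero (AddMonoidHom.mk' φ hadd) i, smul_zero]

theorem iterate_finset_sum (hadd : ∀ u v : D, φ (u + v) = φ u + φ v) {ι : Type*}
    (s : Finset ι) (f : ι → D) (i : ℕ) : φ^[i] (∑ j ∈ s, f j) = ∑ j ∈ s, φ^[i] (f j) := by
  induction i with
  | zero => rfl
  | succ i ih =>
    simp only [Function.iterate_succ_apply', ih]
    exact map_sum (AddMonoidHom.mk' φ hadd) _ s

theorem iterate_smul (hsemi : ∀ (c : K) (u : D), φ (c • u) = c ^ q • φ u) (i : ℕ) (c : K)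
    (u : D) : φ^[i] (c • u) = c ^ q ^ i • φ^[i] u := by
  induction i with
  | zero => simp
  | succ i ih => rw [Function.iterate_succ_apply', ih, hsemi, Function.iterate_succ_apply',
      ← pow_mul, ← pow_succ]

theorem skewEval_skewMul (hadd : ∀ u v : D, φ (u + v) = φ u + φ v)
    (hsemi : ∀ (c : K) (u : D), φ (c • u) = c ^ q • φ u) (P Q : K[X]) (x : D) :
    skewEval (skewMul q P Q) φ x = skewEval P φ (skewEval Q φ x) := by
  induction P using Polynomial.induction_on' with
  | add f g hf hg => rw [skewMul_add_left, skewEval_add, skewEval_add, hf, hg]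
  | monomial i c =>
    rw [skewMul_eq_sum, sum_monomial_index _ _ (by simp [Polynomial.sum]), skewEval_monomial,
      Polynomial.sum, skewEval_finset_sum, skewEval, iterate_finset_sum hadd, Finset.smul_sum]
    refine Finset.sum_congr rfl fun j _ => ?_
    rw [skewEval_monomial, iterate_smul hsemi, smul_smul, Function.iterate_add_apply]

end SkewEval

def IsSkewCyclicVector (K : Type*) {D : Type*} [Field K] [AddCommGroup D] [Module K D]
    (φ : D → D) (z : D) : Prop :=
  ∀ w : D, ∃ R : K[X], skewEval R φ z = w

section CyclicVector

variable {K D : Type*} [Field K] [AddCommGroup D] [Module K D] {q : ℕ} {φ : D → D}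

theorem isSkewCyclicVector_of_linearIndependent [FiniteDimensional K D] {x : D}
    (hx : LinearIndependent K fun i : Fin (finrank K D) => φ^[i] x) :
    IsSkewCyclicVector K φ x := by
  classical
  intro w
  have hw : w ∈ Submodule.span K (Set.range fun i : Fin (finrank K D) => φ^[i] x) := by
    rw [hx.span_eq_top_of_card_eq_finrank' (Fintype.card_fin _)]
    trivial
  obtain ⟨c, hc⟩ := (Submodule.mem_span_range_iff_exists_fun K).1 hw
  exact ⟨ofFn _ c, by rw [skewEval_ofFn, hc]⟩

theorem IsSkewCyclicVector.of_skewEval (hadd : ∀ u v : D, φ (u + v) = φ u + φ v)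
    (hsemi : ∀ (c : K) (u : D), φ (c • u) = c ^ q • φ u) {A : K[X]} {z : D}
    (h : IsSkewCyclicVector K φ (skewEval A φ z)) : IsSkewCyclicVector K φ z := by
  intro w
  obtain ⟨R, rfl⟩ := h w
  exact ⟨skewMul q R A, skewEval_skewMul hadd hsemi R A z⟩

theorem skewEval_mem_span_of_skewEval_eq_zero (hadd : ∀ u v : D, φ (u + v) = φ u + φ v)
    (hsemi : ∀ (c : K) (u : D), φ (c • u) = c ^ q • φ u) {B : K[X]} {z : D} (hB : B ≠ 0)
    (hBz : skewEval B φ z = 0) (P : K[X]) :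
    skewEval P φ z ∈ Submodule.span K (Set.range fun i : Fin B.natDegree => φ^[i] z) := by
  obtain ⟨Q, R, rfl, hR⟩ := exists_eq_skewMul_add_of_ne_zero (q := q) hB P
  rw [skewEval_add, skewEval_skewMul hadd hsemi, hBz, skewEval_apply_zero hadd, zero_add]
  refine Submodule.sum_mem _ fun i hi => Submodule.smul_mem _ _ (Submodule.subset_span ?_)
  have hi : (i : WithBot ℕ) < B.natDegree :=
    (le_degree_of_mem_supp i hi).trans_lt (hR.trans_eq (degree_eq_natDegree hB))
  exact ⟨⟨i, WithBot.coe_lt_coe.1 hi⟩, rfl⟩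

theorem IsSkewCyclicVector.finrank_le_natDegree (hadd : ∀ u v : D, φ (u + v) = φ u + φ v)
    (hsemi : ∀ (c : K) (u : D), φ (c • u) = c ^ q • φ u) {z : D}
    (hz : IsSkewCyclicVector K φ z) {B : K[X]} (hB : B ≠ 0) (hBz : skewEval B φ z = 0) :
    finrank K D ≤ B.natDegree := by
  have hspan : Submodule.span K (Set.range fun i : Fin B.natDegree => φ^[i] z) = ⊤ := by
    refine eq_top_iff.2 fun w _ => ?_
    obtain ⟨P, rfl⟩ := hz w
    exact skewEval_mem_span_of_skewEval_eq_zero hadd hsemi hB hBz P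
  rw [← finrank_top K D, ← hspan]
  exact (finrank_range_le_card (R := K) _).trans_eq (Fintype.card_fin _)

end CyclicVector

section MinSkew

variable {K D : Type*} [Field K] [AddCommGroup D] [Module K D] {q : ℕ} {φ : D → D} {x : D}
  {χ : K[X]}

theorem IsMinSkew.natDegree_le_finrank [FiniteDimensional K D] (hχ : IsMinSkew χ φ x) :
    χ.natDegree ≤ finrank K D := by
  classical
  have hdep : ¬LinearIndependent K fun i : Fin (finrank K D + 1) => φ^[i] x := fun h => by
    simpa using h.fintype_card_le_finrank
  obtain ⟨g, hg, i, hi⟩ := Fintype.not_linearIndependent_iff.1 hdep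
  have hP : ofFn _ g ≠ 0 := fun h => hi <| by
    simpa [ofFn_coeff_eq_val_of_lt g i.2] using congr_arg (coeff · i) h
  have := hχ.2.2 _ hP (by rw [skewEval_ofFn, hg])
  have := ofFn_natDegree_lt (Nat.le_add_left 1 _) g
  omega

theorem IsMinSkew.skewRightDvd (hadd : ∀ u v : D, φ (u + v) = φ u + φ v)
    (hsemi : ∀ (c : K) (u : D), φ (c • u) = c ^ q • φ u) (hχ : IsMinSkew χ φ x) {N : K[X]}
    (hN : skewEval N φ x = 0) : SkewRightDvd q χ N := by
  obtain ⟨S, R, rfl, hR⟩ := exists_eq_skewMul_add_of_ne_zero (q := q) hχ.1.ne_zero N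
  have hRx : skewEval R φ x = 0 := by
    rwa [skewEval_add, skewEval_skewMul hadd hsemi, hχ.2.1, skewEval_apply_zero hadd,
      zero_add] at hN
  obtain rfl : R = 0 := by
    by_contra hR0
    exact (natDegree_lt_natDegree hR0 hR).not_ge (hχ.2.2 R hR0 hRx)
  exact ⟨S, add_zero _⟩

theorem IsMinSkew.natDegree_eq_zero_of_skewRightDvd [FiniteDimensional K D]
    (hadd : ∀ u v : D, φ (u + v) = φ u + φ v)
    (hsemi : ∀ (c : K) (u : D), φ (c • u) = c ^ q • φ u) (hχ : IsMinSkew χ φ x) {E : K[X]}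
    (hE : SkewRightDvd q E χ) (hz : IsSkewCyclicVector K φ (skewEval E φ x)) :
    E.natDegree = 0 := by
  have hE0 := ne_zero_of_skewRightDvd hE hχ.1.ne_zero
  obtain ⟨B, hB⟩ := hE
  have hB0 : B ≠ 0 := by
    rintro rfl
    exact hχ.1.ne_zero (hB.trans (skewMul_zero_left E))
  have hBz : skewEval B φ (skewEval E φ x) = 0 := by
    rw [← skewEval_skewMul hadd hsemi, ← hB, hχ.2.1]
  have hlow := hz.finrank_le_natDegree hadd hsemi hB0 hBz
  have hhigh := hχ.natDegree_le_finrank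
  rw [hB, natDegree_skewMul hB0 hE0] at hhigh
  omega

end MinSkew

theorem semichar_of_generators_similar_general (K : Type*) [Field K]
    (p a q : ℕ) (hp : p.Prime) [CharP K p] (hq : q = p ^ a)
    (D : Type*) [AddCommGroup D] [Module K D] [FiniteDimensional K D]
    (φ : D → D) (hadd : ∀ x y : D, φ (x + y) = φ x + φ y)
    (hsemi : ∀ (c : K) (x : D), φ (c • x) = c ^ q • φ x)
    (x y : D)
    (hx : LinearIndependent K (fun i : Fin (Module.finrank K D) => φ^[(i : ℕ)] x))
    (hy : LinearIndependent K (fun i : Fin (Module.finrank K D) => φ^[(i : ℕ)] y))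
    (χx χy : Polynomial K) (hχx : IsMinSkew χx φ x) (hχy : IsMinSkew χy φ y) :
    SkewSimilar q χx χy := by
  have := Fact.mk hp
  have hq0 : q ≠ 0 := hq ▸ pow_ne_zero a hp.ne_zero
  have hfrob : ∀ u v : K, (u + v) ^ q = u ^ q + v ^ q := fun u v => hq ▸ add_pow_char_pow u v p a
  obtain ⟨U, hU⟩ := isSkewCyclicVector_of_linearIndependent hx y
  refine ⟨U, ?_, ⟨χy, rfl⟩, ?_, ?_⟩
  · rintro E ⟨A, hA⟩ hE
    refine skewRightDvd_one_of_natDegree_eq_zero hq0 (ne_zero_of_skewRightDvd hE hχx.1.ne_zero)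
      (hχx.natDegree_eq_zero_of_skewRightDvd hadd hsemi hE ?_)
    have hAE : skewEval A φ (skewEval E φ x) = y := by
      rw [← skewEval_skewMul hadd hsemi, ← hA, hU]
    exact .of_skewEval hadd hsemi (hAE ▸ isSkewCyclicVector_of_linearIndependent hy)
  · exact hχx.skewRightDvd hadd hsemi (by rw [skewEval_skewMul hadd hsemi, hU, hχy.2.1])
  · rintro N ⟨S, rfl⟩ ⟨T, hT⟩
    have hSy : skewEval S φ y = 0 := by
      rw [← hU, ← skewEval_skewMul hadd hsemi, hT, skewEval_skewMul hadd hsemi, hχx.2.1,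
        skewEval_apply_zero hadd]
    obtain ⟨C, rfl⟩ := hχy.skewRightDvd hadd hsemi hSy
    exact ⟨C, skewMul_assoc hq0 hfrob C χy U⟩

/-- If `x` and `y` both generate the `φ`-module `D`, then the minimal skew
polynomials `χ_{φ,x}` and `χ_{φ,y}` are similar in `K[X,σ]`: there is `U` such that every
common right divisor of `U` and `χ_{φ,x}` right-divides `1`, and
`llcm(U, χ_{φ,x}) = χ_{φ,y} ⬝ U`. -/
theorem semichar_of_generators_similar (K : Type*) [Field K]
    (p a q : ℕ) (hp : p.Prime) [CharP K p] (ha : 0 < a) (hq : q = p ^ a)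
    (hFq : Nat.card {x : K // x ^ q = x} = q)
    (D : Type*) [AddCommGroup D] [Module K D] [FiniteDimensional K D]
    (φ : D → D) (hadd : ∀ x y : D, φ (x + y) = φ x + φ y)
    (hsemi : ∀ (c : K) (x : D), φ (c • x) = c ^ q • φ x)
    (x y : D)
    (hx : LinearIndependent K (fun i : Fin (Module.finrank K D) => φ^[(i : ℕ)] x))
    (hy : LinearIndependent K (fun i : Fin (Module.finrank K D) => φ^[(i : ℕ)] y))
    (χx χy : Polynomial K) (hχx : IsMinSkew χx φ x) (hχy : IsMinSkew χy φ y) :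
    SkewSimilar q χx χy :=
  semichar_of_generators_similar_general K p a q hp hq D φ hadd hsemi x y hx hy χx χy hχx hχy
end

section
/- Let P ∈ F_{q^r}[X,σ] be monic of degree d with nonzero constant coefficient, and let φ be the σ-semilinear map on F_{q^r}^d whose matrix is the companion matrix of P, with e_0 the first standard basis vector. Let π ∈ F_q[Y] be the minimal polynomial of the F_{q^r}-linear map φ^r. Then π(X^r) is the monic polynomial of least degree in the center F_q[X^r] of F_{q^r}[X,σ] that is right-divisible by P. -/
/-- A skew polynomial lies in the center `F_q[X^r]` of `F_{q^r}[X,σ]`: all its nonzero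
coefficients sit in degrees divisible by `r` and are fixed by the `q`-power Frobenius. -/
def IsCentralSkew {K : Type*} [Field K] (q r : ℕ) (Q : Polynomial K) : Prop :=
  ∀ n : ℕ, Q.coeff n ≠ 0 → r ∣ n ∧ Q.coeff n ^ q = Q.coeff n

/-!
Let `P` be the companion polynomial and `e₀ = e 0`. Since `e₀, φ e₀, …, φ^(d-1) e₀` is a basis,
division with remainder on the right shows that the skew polynomials killing `e₀` are exactly
the left multiples of `P`. A central polynomial `Q = Q₀(X^r)` acts on `D` as `Q₀(ψ)` and commutes
with `φ`, so `Q` kills `e₀` iff it kills all of `D` iff `π ∣ Q₀`. In particular `π(X^r)` is a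
left multiple of `P`. It is central because, as `c₀ ≠ 0`, the map `φ` is surjective, and
conjugating `ψ` by `φ` applies Frobenius to the coefficients of its minimal polynomial, so
these lie in `F_q`.
-/

open Polynomial

section SkewMul

variable {K : Type*} [Field K] (q : ℕ)

lemma skewMul_eq_sum_of_support_subset {A : K[X]} (B : K[X]) {s : Finset ℕ}
    (hs : A.support ⊆ s) :
    skewMul q A B = ∑ i ∈ s, ∑ j ∈ B.support, C (A.coeff i * B.coeff j ^ q ^ i) * X ^ (i + j) :=
  Finset.sum_subset hs fun i _ hi => by simp [notMem_support_iff.mp hi]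

@[simp]
lemma zero_skewMul (B : K[X]) : skewMul q 0 B = 0 := by
  simp [skewMul]

lemma add_skewMul (A₁ A₂ B : K[X]) :
    skewMul q (A₁ + A₂) B = skewMul q A₁ B + skewMul q A₂ B := by
  rw [skewMul_eq_sum_of_support_subset q B support_add,
    skewMul_eq_sum_of_support_subset q B Finset.subset_union_left,
    skewMul_eq_sum_of_support_subset q B Finset.subset_union_right, ← Finset.sum_add_distrib]
  refine Finset.sum_congr rfl fun i _ => ?_
  simp only [coeff_add, add_mul, map_add, Finset.sum_add_distrib]

lemma C_mul_X_pow_skewMul (a : K) (k : ℕ) (B : K[X]) :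
    skewMul q (C a * X ^ k) B = ∑ j ∈ B.support, C (a * B.coeff j ^ q ^ k) * X ^ (k + j) := by
  rw [skewMul_eq_sum_of_support_subset q B (support_C_mul_X_pow_subset k a), Finset.sum_singleton]
  simp [coeff_C_mul, coeff_X_pow]

lemma natDegree_C_mul_X_pow_skewMul_le (a : K) (k : ℕ) (B : K[X]) :
    (skewMul q (C a * X ^ k) B).natDegree ≤ k + B.natDegree := by
  rw [C_mul_X_pow_skewMul]
  refine natDegree_sum_le_of_forall_le _ _ fun j hj => (natDegree_C_mul_X_pow_le _ _).trans ?_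
  have := le_natDegree_of_mem_supp j hj
  omega

lemma coeff_C_mul_X_pow_skewMul_add (hq : 0 < q) (a : K) (k n : ℕ) (B : K[X]) :
    (skewMul q (C a * X ^ k) B).coeff (k + n) = a * B.coeff n ^ q ^ k := by
  rw [C_mul_X_pow_skewMul, finsetSum_coeff]
  simp only [coeff_C_mul_X_pow, add_right_inj]
  rw [Finset.sum_ite_eq]
  split_ifs with hn
  · rfl
  · rw [notMem_support_iff.mp hn, zero_pow (pow_ne_zero _ hq.ne'), mul_zero]

lemma degree_sub_skewMul_lt (hq : 0 < q) {P B : K[X]} (hP : P.Monic) (h : P.degree ≤ B.degree) :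
    (B - skewMul q (C B.leadingCoeff * X ^ (B.natDegree - P.natDegree)) P).degree
      < B.degree := by
  set M := skewMul q (C B.leadingCoeff * X ^ (B.natDegree - P.natDegree)) P
  have hB : B ≠ 0 := fun hB => by simp [hB, hP.ne_zero] at h
  have hPB : P.natDegree ≤ B.natDegree := natDegree_le_natDegree h
  have hlc : B.leadingCoeff ≠ 0 := leadingCoeff_ne_zero.mpr hB
  have hcoeff : M.coeff B.natDegree = B.leadingCoeff := by
    have := coeff_C_mul_X_pow_skewMul_add q hq B.leadingCoeff (B.natDegree - P.natDegree)
      P.natDegree P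
    rwa [Nat.sub_add_cancel hPB, hP.coeff_natDegree, one_pow, mul_one] at this
  have hdeg : M.natDegree = B.natDegree := natDegree_eq_of_le_of_coeff_ne_zero
    ((natDegree_C_mul_X_pow_skewMul_le q _ _ _).trans (by omega)) (hcoeff ▸ hlc)
  have hM : M ≠ 0 := fun hM => hlc (by rw [← hcoeff, hM, coeff_zero])
  refine degree_sub_lt_left ?_ hB ?_
  · rw [degree_eq_natDegree hB, degree_eq_natDegree hM, hdeg]
  · rw [← hcoeff, leadingCoeff, hdeg]

theorem exists_eq_skewMul_add_of_monic (hq : 0 < q) {P : K[X]} (hP : P.Monic) (B : K[X]) :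
    ∃ Q R : K[X], B = skewMul q Q P + R ∧ R.degree < P.degree := by
  induction hδ : B.degree using WellFoundedLT.induction generalizing B with
  | _ δ ih =>
    by_cases hlt : B.degree < P.degree
    · exact ⟨0, B, by simp, hlt⟩
    obtain ⟨Q, R, hQR, hR⟩ := ih _ (hδ ▸ degree_sub_skewMul_lt q hq hP (not_lt.mp hlt)) _ rfl
    refine ⟨C B.leadingCoeff * X ^ (B.natDegree - P.natDegree) + Q, R, ?_, hR⟩
    rw [add_skewMul, add_assoc, ← hQR]
    ring

end SkewMul

lemma AddMonoid.End.pow_add_apply {M : Type*} [AddZeroClass M] (f : AddMonoid.End M)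
    (m n : ℕ) (v : M) : (f ^ (m + n)) v = (f ^ m) ((f ^ n) v) := by
  rw [pow_add]
  rfl

lemma AddMonoid.End.pow_succ_apply' {M : Type*} [AddZeroClass M] (f : AddMonoid.End M)
    (n : ℕ) (v : M) : (f ^ (n + 1)) v = f ((f ^ n) v) := by
  rw [pow_succ']
  rfl

section SkewAct

variable {K : Type*} [Field K] {D : Type*} [AddCommGroup D] [Module K D]
  {q : ℕ} {φ : AddMonoid.End D}

variable (φ) in
/-- `A ↦ A • v` for the `K[X,σ]`-module structure on `D` in which `X` acts by `φ`. -/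
noncomputable def skewAct (v : D) : K[X] →ₗ[K] D :=
  lsum fun n => LinearMap.toSpanSingleton K D ((φ ^ n) v)

lemma skewAct_apply (v : D) (A : K[X]) : skewAct φ v A = A.sum fun n a => a • (φ ^ n) v := by
  simp [skewAct]

lemma skewAct_C_mul_X_pow (v : D) (a : K) (n : ℕ) :
    skewAct φ v (C a * X ^ n) = a • (φ ^ n) v := by
  rw [skewAct_apply, C_mul_X_pow_eq_monomial, sum_monomial_index _ _ (zero_smul K _)]

@[simp]
lemma skewAct_zero (A : K[X]) : skewAct φ (0 : D) A = 0 := by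
  simp [skewAct_apply, sum_def]

section Semilinear

variable (hsemi : ∀ (s : K) (u : D), φ (s • u) = s ^ q • φ u)
include hsemi

lemma pow_apply_smul (n : ℕ) (s : K) (u : D) : (φ ^ n) (s • u) = s ^ q ^ n • (φ ^ n) u := by
  induction n with
  | zero => simp
  | succ n ih => rw [AddMonoid.End.pow_succ_apply', AddMonoid.End.pow_succ_apply', ih, hsemi,
      ← pow_mul, ← pow_succ]

lemma skewAct_skewMul (v : D) (A B : K[X]) :
    skewAct φ v (skewMul q A B) = skewAct φ (skewAct φ v B) A := by
  simp only [skewMul, map_sum, skewAct_C_mul_X_pow]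
  rw [skewAct_apply, sum_def]
  refine Finset.sum_congr rfl fun i _ => ?_
  rw [skewAct_apply, sum_def, map_sum, Finset.smul_sum]
  refine Finset.sum_congr rfl fun j _ => ?_
  rw [pow_apply_smul hsemi, smul_smul, AddMonoid.End.pow_add_apply]

lemma apply_skewAct {σ : K →+* K} (hσ : ∀ x, σ x = x ^ q) (v : D) (A : K[X]) :
    φ (skewAct φ v A) = skewAct φ (φ v) (A.map σ) := by
  rw [skewAct_apply, skewAct_apply, sum_def, sum_def, map_sum,
    support_map_of_injective _ σ.injective]
  refine Finset.sum_congr rfl fun n _ => ?_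
  rw [hsemi, coeff_map, hσ, ← AddMonoid.End.pow_succ_apply', AddMonoid.End.pow_add_apply, pow_one]

lemma pow_apply_skewAct_of_map_eq {σ : K →+* K} (hσ : ∀ x, σ x = x ^ q) {Q : K[X]}
    (hQ : Q.map σ = Q) (m : ℕ) (v : D) :
    (φ ^ m) (skewAct φ v Q) = skewAct φ ((φ ^ m) v) Q := by
  induction m with
  | zero => rfl
  | succ m ih => rw [AddMonoid.End.pow_succ_apply', ih, apply_skewAct hsemi hσ, hQ,
      ← AddMonoid.End.pow_succ_apply']

end Semilinear

section Expand

variable {r : ℕ} {ψ : Module.End K D} (hψ : ∀ u, ψ u = (φ ^ r) u)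
include hψ

lemma pow_apply_eq_pow_mul (n : ℕ) (u : D) : (ψ ^ n) u = (φ ^ (r * n)) u := by
  induction n generalizing u with
  | zero => rfl
  | succ n ih => rw [pow_succ, Module.End.mul_apply, ih, hψ, ← AddMonoid.End.pow_add_apply,
      mul_add_one]

lemma skewAct_expand (v : D) (A : K[X]) : skewAct φ v (expand K r A) = aeval ψ A v := by
  induction A using Polynomial.induction_on' with
  | add A B hA hB => rw [map_add, map_add, hA, hB, map_add, LinearMap.add_apply]
  | monomial n a =>
    rw [expand_monomial, ← C_mul_X_pow_eq_monomial, skewAct_C_mul_X_pow, aeval_monomial,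
      Module.End.mul_apply, Module.algebraMap_end_apply, pow_apply_eq_pow_mul hψ, mul_comm]

lemma minpoly_map_eq [FiniteDimensional K D]
    (hsemi : ∀ (s : K) (u : D), φ (s • u) = s ^ q • φ u) {σ : K →+* K} (hσ : ∀ x, σ x = x ^ q)
    (hφ : Function.Surjective φ) :
    (minpoly K ψ).map σ = minpoly K ψ := by
  have hmonic := minpoly.monic (Algebra.IsIntegral.isIntegral (R := K) ψ)
  have hann : aeval ψ ((minpoly K ψ).map σ) = 0 := LinearMap.ext fun w => by
    obtain ⟨v, rfl⟩ := hφ w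
    rw [← skewAct_expand hψ, ← map_expand, ← apply_skewAct hsemi hσ, skewAct_expand hψ,
      minpoly.aeval, LinearMap.zero_apply, map_zero, LinearMap.zero_apply]
  exact eq_of_monic_of_dvd_of_natDegree_le hmonic (hmonic.map σ) (minpoly.dvd K ψ hann)
    natDegree_map_le

end Expand

end SkewAct

section Central

variable {K : Type*} [Field K] {q r : ℕ}

lemma isCentralSkew_expand (hr : 0 < r) {A : K[X]} (hA : ∀ k, A.coeff k ^ q = A.coeff k) :
    IsCentralSkew q r (expand K r A) := by
  intro n hn
  rw [coeff_expand hr] at hn ⊢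
  split_ifs at hn ⊢ with hrn
  · exact ⟨hrn, hA _⟩
  · exact absurd rfl hn

lemma IsCentralSkew.expand_contract (hr : 0 < r) {Q : K[X]} (hQ : IsCentralSkew q r Q) :
    expand K r (contract r Q) = Q := by
  ext n
  rw [coeff_expand hr]
  split_ifs with hrn
  · rw [coeff_contract hr.ne', Nat.div_mul_cancel hrn]
  · by_contra hn
    exact hrn (hQ n (Ne.symm hn)).1

lemma IsCentralSkew.map_eq (hq : 0 < q) {σ : K →+* K} (hσ : ∀ x, σ x = x ^ q) {Q : K[X]}
    (hQ : IsCentralSkew q r Q) : Q.map σ = Q := by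
  ext n
  rw [coeff_map, hσ]
  by_cases hn : Q.coeff n = 0
  · rw [hn, zero_pow hq.ne']
  · exact (hQ n hn).2

end Central

section Companion

variable {K : Type*} [Field K] {d : ℕ}

/-- The hypotheses `hstep` and `hlast` below say that the matrix of `φ` in the basis `e` is
the companion matrix of this polynomial. -/
noncomputable def companionPoly (c : Fin d → K) : K[X] :=
  X ^ d - ∑ i : Fin d, C (c i) * X ^ (i : ℕ)

lemma companionPoly_monic (c : Fin d → K) : (companionPoly c).Monic :=
  monic_X_pow_sub (degree_sum_fin_lt (R := K) c)

lemma degree_companionPoly (c : Fin d → K) : (companionPoly c).degree = d := by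
  rw [companionPoly, degree_sub_eq_left_of_degree_lt] <;> rw [degree_X_pow]
  exact degree_sum_fin_lt c

variable {D : Type*} [AddCommGroup D] [Module K D] {q : ℕ} {φ : AddMonoid.End D}
  (hd : 0 < d) {e : Module.Basis (Fin d) K D} {c : Fin d → K}
  (hstep : ∀ (i : Fin d) (h : (i : ℕ) + 1 < d), φ (e i) = e ⟨(i : ℕ) + 1, h⟩)

include hstep

lemma pow_apply_basis_zero (i : ℕ) (hi : i < d) : (φ ^ i) (e ⟨0, hd⟩) = e ⟨i, hi⟩ := by
  induction i with
  | zero => rfl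
  | succ i ih => rw [AddMonoid.End.pow_succ_apply', ih (by omega), hstep ⟨i, by omega⟩ hi]

lemma skewAct_companionPoly (hlast : φ (e ⟨d - 1, by omega⟩) = ∑ i, c i • e i) :
    skewAct φ (e ⟨0, hd⟩) (companionPoly c) = 0 := by
  have hXd : skewAct φ (e ⟨0, hd⟩) (X ^ d : K[X]) = ∑ i, c i • e i := by
    rw [← one_mul (X ^ d : K[X]), ← C_1, skewAct_C_mul_X_pow, one_smul, ← hlast,
      ← pow_apply_basis_zero hd hstep (d - 1), ← AddMonoid.End.pow_succ_apply',
      Nat.sub_add_cancel hd]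
  rw [companionPoly, map_sub, hXd, map_sum, sub_eq_zero]
  refine Finset.sum_congr rfl fun i _ => ?_
  rw [skewAct_C_mul_X_pow, pow_apply_basis_zero hd hstep _ i.2]

lemma eq_zero_of_skewAct_basis_zero_eq_zero {R : K[X]} (hR : R.degree < d)
    (h : skewAct φ (e ⟨0, hd⟩) R = 0) : R = 0 := by
  rcases eq_or_ne R 0 with hR0 | hR0
  · exact hR0
  have hsum : ∑ i : Fin d, R.coeff i • e i = 0 := by
    rw [← h, skewAct_apply, sum_over_range' R (fun n => zero_smul K ((φ ^ n) (e ⟨0, hd⟩))) d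
      ((natDegree_lt_iff_degree_lt hR0).mpr hR), ← Fin.sum_univ_eq_sum_range]
    exact Finset.sum_congr rfl fun i _ => by rw [pow_apply_basis_zero hd hstep _ i.2]
  have hcoeff := Fintype.linearIndependent_iff.mp e.linearIndependent _ hsum
  ext n
  rw [coeff_zero]
  by_cases hn : n < d
  · exact hcoeff ⟨n, hn⟩
  · exact coeff_eq_zero_of_degree_lt (hR.trans_le (by exact_mod_cast not_lt.mp hn))

lemma surjective_of_companion (hsemi : ∀ (s : K) (u : D), φ (s • u) = s ^ q • φ u)
    (hfrob : Function.Surjective fun x : K => x ^ q)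
    (hlast : φ (e ⟨d - 1, by omega⟩) = ∑ i, c i • e i) (hc0 : c ⟨0, hd⟩ ≠ 0) :
    Function.Surjective φ := by
  let S : Submodule K D :=
    { carrier := Set.range φ
      add_mem' := by
        rintro _ _ ⟨u, rfl⟩ ⟨v, rfl⟩
        exact ⟨u + v, map_add φ u v⟩
      zero_mem' := ⟨0, map_zero φ⟩
      smul_mem' := by
        rintro s _ ⟨u, rfl⟩
        obtain ⟨t, rfl⟩ := hfrob s
        exact ⟨t • u, hsemi t u⟩ }
  have hpos : ∀ i : Fin d, i ≠ ⟨0, hd⟩ → e i ∈ S := fun i hi => by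
    obtain ⟨j, hj⟩ := Nat.exists_eq_add_one_of_ne_zero (Fin.ext_iff.not.mp hi)
    refine ⟨(φ ^ j) (e ⟨0, hd⟩), ?_⟩
    rw [← AddMonoid.End.pow_succ_apply', pow_apply_basis_zero hd hstep (j + 1) (hj ▸ i.2)]
    exact congrArg e (Fin.ext hj.symm)
  have hzero : e ⟨0, hd⟩ ∈ S := by
    have hlast' : ∑ i, c i • e i ∈ S := ⟨_, hlast⟩
    rw [← Finset.add_sum_erase _ _ (Finset.mem_univ ⟨0, hd⟩)] at hlast'
    refine (S.smul_mem_iff hc0).mp ((S.add_mem_iff_left (S.sum_mem fun i hi => ?_)).mp hlast')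
    exact S.smul_mem _ (hpos i (Finset.ne_of_mem_erase hi))
  have htop : ⊤ ≤ S := by
    rw [← e.span_eq, Submodule.span_le]
    rintro _ ⟨i, rfl⟩
    exact if hi : i = ⟨0, hd⟩ then hi ▸ hzero else hpos i hi
  exact fun w => htop Submodule.mem_top

variable {r : ℕ} {ψ : Module.End K D} (hψ : ∀ u, ψ u = (φ ^ r) u)
  (hsemi : ∀ (s : K) (u : D), φ (s • u) = s ^ q • φ u)
  (hlast : φ (e ⟨d - 1, by omega⟩) = ∑ i, c i • e i)
include hψ hsemi hlast

lemma skewRightDvd_companionPoly_expand_minpoly (hq : 0 < q) :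
    SkewRightDvd q (companionPoly c) (expand K r (minpoly K ψ)) := by
  obtain ⟨Q, R, hQR, hR⟩ :=
    exists_eq_skewMul_add_of_monic q hq (companionPoly_monic c) (expand K r (minpoly K ψ))
  have hRact : skewAct φ (e ⟨0, hd⟩) R = 0 := by
    have h := skewAct_expand hψ (e ⟨0, hd⟩) (minpoly K ψ)
    rwa [minpoly.aeval, LinearMap.zero_apply, hQR, map_add, skewAct_skewMul hsemi,
      skewAct_companionPoly hd hstep hlast, skewAct_zero, zero_add] at h
  refine ⟨Q, ?_⟩
  rw [hQR, eq_zero_of_skewAct_basis_zero_eq_zero hd hstep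
    (degree_companionPoly (K := K) c ▸ hR) hRact, add_zero]

lemma minpoly_dvd_contract (hq : 0 < q) (hr : 0 < r) {σ : K →+* K} (hσ : ∀ x, σ x = x ^ q)
    {Q : K[X]} (hQ : IsCentralSkew q r Q) (hdvd : SkewRightDvd q (companionPoly c) Q) :
    minpoly K ψ ∣ contract r Q := by
  obtain ⟨B, hB⟩ := hdvd
  have hQact : skewAct φ (e ⟨0, hd⟩) Q = 0 := by
    rw [hB, skewAct_skewMul hsemi, skewAct_companionPoly hd hstep hlast, skewAct_zero]
  refine minpoly.dvd K ψ (e.ext fun i => ?_)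
  rw [← skewAct_expand hψ, hQ.expand_contract hr, LinearMap.zero_apply,
    ← pow_apply_basis_zero hd hstep i i.2,
    ← pow_apply_skewAct_of_map_eq hsemi hσ (hQ.map_eq hq hσ), hQact, map_zero]

end Companion

/-- Let `P = X^d − Σ cᵢ Xⁱ ∈ F_{q^r}[X,σ]` be monic of degree `d` with
nonzero constant coefficient, `φ` the `σ`-semilinear map with matrix the companion matrix
of `P` (in the basis `e`, with `e₀` the first basis vector), and `π ∈ F_q[Y]` the minimal
polynomial of the `F_{q^r}`-linear map `ψ = φ^r`. Then `π(X^r)` is the monic central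
polynomial of least degree that is right-divisible by `P` (the optimal bound of `P`). -/
theorem optimal_bound
    (p a q r : ℕ) (hp : p.Prime) (hq : q = p ^ a) (hr : 0 < r)
    (F : Type*) [Field F] [Fintype F] [CharP F p]
    (d : ℕ) (hd : 0 < d) (c : Fin d → F) (hc0 : c ⟨0, hd⟩ ≠ 0)
    (D : Type*) [AddCommGroup D] [Module F D]
    (e : Module.Basis (Fin d) F D)
    (φ : D → D) (hadd : ∀ u v : D, φ (u + v) = φ u + φ v)
    (hsemi : ∀ (s : F) (u : D), φ (s • u) = s ^ q • φ u)
    (hstep : ∀ (i : Fin d) (h : (i : ℕ) + 1 < d), φ (e i) = e ⟨(i : ℕ) + 1, h⟩)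
    (hlast : φ (e ⟨d - 1, by omega⟩) = ∑ i : Fin d, c i • e i)
    (ψ : Module.End F D) (hψ : ∀ u : D, ψ u = φ^[r] u) :
    ((minpoly F ψ).comp (Polynomial.X ^ r)).Monic ∧
    IsCentralSkew q r ((minpoly F ψ).comp (Polynomial.X ^ r)) ∧
    SkewRightDvd q (Polynomial.X ^ d - ∑ i : Fin d, Polynomial.C (c i) * Polynomial.X ^ (i : ℕ))
      ((minpoly F ψ).comp (Polynomial.X ^ r)) ∧
    ∀ Q : Polynomial F, Q ≠ 0 → IsCentralSkew q r Q →
      SkewRightDvd q (Polynomial.X ^ d - ∑ i : Fin d, Polynomial.C (c i) * Polynomial.X ^ (i : ℕ)) Q →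
      ((minpoly F ψ).comp (Polynomial.X ^ r)).natDegree ≤ Q.natDegree := by
  have : Fact p.Prime := ⟨hp⟩
  have : FiniteDimensional F D := Module.Finite.of_basis e
  let Φ : AddMonoid.End D := AddMonoidHom.mk' φ hadd
  have hΨ : ∀ u, ψ u = (Φ ^ r) u := fun u => by rw [hψ, AddMonoid.End.coe_pow]; rfl
  have hq0 : 0 < q := hq ▸ pow_pos hp.pos a
  let σ := iterateFrobenius F p a
  have hσ : ∀ x, σ x = x ^ q := fun x => by rw [iterateFrobenius_def, hq]
  have hΦ : Function.Surjective Φ := surjective_of_companion hd hstep hsemi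
    (Finite.surjective_of_injective (funext hσ ▸ σ.injective)) hlast hc0
  have hmonic := minpoly.monic (Algebra.IsIntegral.isIntegral (R := F) ψ)
  rw [← expand_eq_comp_X_pow]
  refine ⟨hmonic.expand hr, isCentralSkew_expand hr fun k => ?_,
    skewRightDvd_companionPoly_expand_minpoly hd hstep hΨ hsemi hlast hq0,
    fun Q hQ0 hQ hdvd => ?_⟩
  · rw [← hσ, ← coeff_map, minpoly_map_eq hΨ hsemi hσ hΦ]
  have hdvd' := minpoly_dvd_contract hd hstep hΨ hsemi hlast hq0 hr hσ hQ hdvd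
  rw [natDegree_expand, ← hQ.expand_contract hr, natDegree_expand]
  refine Nat.mul_le_mul_right r (natDegree_le_of_dvd hdvd' fun h => hQ0 ?_)
  rw [← hQ.expand_contract hr, h, map_zero]
end
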